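/- arXiv:2411.19607 — 5 statements merged into one kernel-verified Lean document; each statement's English description precedes it below -/
import Mathlib

section
/- The stabilizing feedback ν_s is continuous on ℝ^p, locally Lipschitz continuous on ℝ^p \ {0}, and satisfies ‖ν_s(ξ)‖ = 1 for every ξ ∈ ℝ^p with ‖ξ‖ ≥ c. -/
open scoped RealInnerProductSpace
open Classical

noncomputable def sc (c r : ℝ) : ℝ :=
  if r ≤ c then c ^ ((2:ℝ)/3) * r ^ ((1:ℝ)/3) else r

noncomputable def nuS (c : ℝ) {p : ℕ} (ξ : EuclideanSpace ℝ (Fin p)) :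
    EuclideanSpace ℝ (Fin p) :=
  if ξ = 0 then 0 else (-(sc c ‖ξ‖)⁻¹) • ξ

noncomputable def proj {p : ℕ} (z v : EuclideanSpace ℝ (Fin p)) :
    EuclideanSpace ℝ (Fin p) :=
  v - (⟪z, v⟫ / ‖z‖ ^ 2) • z

noncomputable def nuA (c : ℝ) {p : ℕ} (q ξ : EuclideanSpace ℝ (Fin p)) :
    EuclideanSpace ℝ (Fin p) :=
  proj (ξ - q) (nuS c ξ)

noncomputable def sigmaQ {p : ℕ} (q ξ : EuclideanSpace ℝ (Fin p)) : ℝ :=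
  max 0 (min (⟪ξ, ξ - q⟫ + 1) 1)

noncomputable def alphaS {p : ℕ} (q : EuclideanSpace ℝ (Fin p)) (Δ lam : ℝ)
    (ξ : EuclideanSpace ℝ (Fin p)) : ℝ :=
  max 0 (min ((‖ξ - q‖ - Δ * sigmaQ q ξ) / (lam - Δ)) 1)

noncomputable def alphaA {p : ℕ} (q : EuclideanSpace ℝ (Fin p)) (Δ lam : ℝ)
    (ξ : EuclideanSpace ℝ (Fin p)) : ℝ :=
  sigmaQ q ξ * (1 - alphaS q Δ lam ξ)

noncomputable def mu (c : ℝ) {p : ℕ} (q : EuclideanSpace ℝ (Fin p)) (Δ lam : ℝ)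
    (ξ : EuclideanSpace ℝ (Fin p)) : EuclideanSpace ℝ (Fin p) :=
  alphaS q Δ lam ξ • nuS c ξ + alphaA q Δ lam ξ • nuA c q ξ

/-!
For `r ≥ 0` one has `r ≤ c ↔ r ≤ c^(2/3) r^(1/3)`, so `s_c(r) = max r (c^(2/3) r^(1/3))`.
Away from `0` the factor `1 / s_c(‖ξ‖)` is therefore the minimum of the two `C¹` functions
`‖ξ‖⁻¹` and `(c^(2/3) ‖ξ‖^(1/3))⁻¹`, which makes `ν_s` locally Lipschitz there. At `0`,
continuity follows from `‖ν_s(ξ)‖ ≤ (‖ξ‖ / c)^(2/3)`.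
-/

open Set Topology

section LocallyLipschitzOn

variable {α β : Type*} [PseudoEMetricSpace α] [PseudoEMetricSpace β] {s : Set α}

lemma LocallyLipschitzOn.congr {f g : α → β} (hf : LocallyLipschitzOn s f) (hfg : EqOn f g s) :
    LocallyLipschitzOn s g := by
  rw [locallyLipschitzOn_iff_restrict] at *
  rwa [← domRestrict_eq_domRestrict_iff.2 hfg]

lemma LocallyLipschitzOn.exists_lipschitzOnWith_nhds {f : α → β} (hf : LocallyLipschitzOn s f)
    (hs : IsOpen s) {x : α} (hx : x ∈ s) : ∃ K, ∃ t ∈ 𝓝 x, LipschitzOnWith K f t := by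
  simpa only [hs.nhdsWithin_eq hx] using hf hx

lemma LocallyLipschitzOn.min {f g : α → ℝ} (hf : LocallyLipschitzOn s f)
    (hg : LocallyLipschitzOn s g) : LocallyLipschitzOn s fun x ↦ min (f x) (g x) := by
  rw [locallyLipschitzOn_iff_restrict] at *
  exact hf.min hg

lemma LocallyLipschitzOn.smul {𝕜 E : Type*} [RCLike 𝕜] [NormedAddCommGroup E] [NormedSpace 𝕜 E]
    {f : α → 𝕜} {g : α → E} (hf : LocallyLipschitzOn s f) (hg : LocallyLipschitzOn s g) :
    LocallyLipschitzOn s fun x ↦ f x • g x := by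
  rw [locallyLipschitzOn_iff_restrict] at *
  exact (contDiff_smul (𝕜 := 𝕜) (n := 1)).locallyLipschitz.comp (hf.prodMk hg)

end LocallyLipschitzOn

lemma locallyLipschitzOn_of_contDiffAt {E F : Type*} [NormedAddCommGroup E] [NormedSpace ℝ E]
    [NormedAddCommGroup F] [NormedSpace ℝ F] {s : Set E} {f : E → F}
    (hf : ∀ x ∈ s, ContDiffAt ℝ 1 f x) : LocallyLipschitzOn s f := fun x hx ↦ by
  obtain ⟨K, t, ht, hK⟩ := (hf x hx).exists_lipschitzOnWith
  exact ⟨K, t, nhdsWithin_le_nhds ht, hK⟩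

lemma inv_max_eq_min_inv {K : Type*} [Field K] [LinearOrder K] [IsStrictOrderedRing K]
    {a b : K} (ha : 0 < a) (hb : 0 < b) : (max a b)⁻¹ = min a⁻¹ b⁻¹ := by
  rcases le_total a b with h | h
  · rw [max_eq_right h, min_eq_right (inv_anti₀ ha h)]
  · rw [max_eq_left h, min_eq_left (inv_anti₀ hb h)]

lemma rpow_two_thirds_mul_rpow_one_third {r : ℝ} (hr : 0 ≤ r) :
    r ^ ((2:ℝ)/3) * r ^ ((1:ℝ)/3) = r := by
  rw [← Real.rpow_add' hr (by norm_num)]; norm_num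

lemma rpow_two_thirds_mul_rpow_one_third_le {a r : ℝ} (ha : 0 ≤ a) (har : a ≤ r) :
    a ^ ((2:ℝ)/3) * r ^ ((1:ℝ)/3) ≤ r :=
  calc a ^ ((2:ℝ)/3) * r ^ ((1:ℝ)/3) ≤ r ^ ((2:ℝ)/3) * r ^ ((1:ℝ)/3) := by
        gcongr; exact Real.rpow_nonneg (ha.trans har) _
    _ = r := rpow_two_thirds_mul_rpow_one_third (ha.trans har)

lemma le_rpow_two_thirds_mul_rpow_one_third {b r : ℝ} (hr : 0 ≤ r) (hrb : r ≤ b) :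
    r ≤ b ^ ((2:ℝ)/3) * r ^ ((1:ℝ)/3) :=
  calc r = r ^ ((2:ℝ)/3) * r ^ ((1:ℝ)/3) := (rpow_two_thirds_mul_rpow_one_third hr).symm
    _ ≤ b ^ ((2:ℝ)/3) * r ^ ((1:ℝ)/3) := by gcongr

lemma sc_eq_max {c r : ℝ} (hc : 0 ≤ c) (hr : 0 ≤ r) :
    sc c r = max r (c ^ ((2:ℝ)/3) * r ^ ((1:ℝ)/3)) := by
  unfold sc
  split_ifs with hrc
  · exact (max_eq_right (le_rpow_two_thirds_mul_rpow_one_third hr hrc)).symm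
  · exact (max_eq_left (rpow_two_thirds_mul_rpow_one_third_le hc (le_of_not_ge hrc))).symm

lemma sc_eq_self_of_le {c r : ℝ} (hc : 0 ≤ c) (hcr : c ≤ r) : sc c r = r := by
  rw [sc_eq_max hc (hc.trans hcr), max_eq_left (rpow_two_thirds_mul_rpow_one_third_le hc hcr)]

lemma inv_sc_eq_min {c r : ℝ} (hc : 0 < c) (hr : 0 < r) :
    (sc c r)⁻¹ = min r⁻¹ (c ^ ((2:ℝ)/3) * r ^ ((1:ℝ)/3))⁻¹ := by
  rw [sc_eq_max hc.le hr.le, inv_max_eq_min_inv hr (by positivity)]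

lemma le_sc {c r : ℝ} (hc : 0 ≤ c) (hr : 0 ≤ r) : c ^ ((2:ℝ)/3) * r ^ ((1:ℝ)/3) ≤ sc c r := by
  rw [sc_eq_max hc hr]
  exact le_max_right _ _

lemma sc_nonneg {c r : ℝ} (hc : 0 ≤ c) (hr : 0 ≤ r) : 0 ≤ sc c r :=
  hr.trans (sc_eq_max hc hr ▸ le_max_left _ _)

section nuS

variable {p : ℕ} {c : ℝ}

lemma nuS_zero : nuS c (0 : EuclideanSpace ℝ (Fin p)) = 0 :=
  if_pos rfl

lemma norm_nuS (hc : 0 ≤ c) (x : EuclideanSpace ℝ (Fin p)) :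
    ‖nuS c x‖ = ‖x‖ / sc c ‖x‖ := by
  rcases eq_or_ne x 0 with rfl | hx
  · simp [nuS_zero]
  · rw [nuS, if_neg hx, norm_smul, norm_neg, norm_inv,
      Real.norm_of_nonneg (sc_nonneg hc (norm_nonneg x)), inv_mul_eq_div]

lemma norm_nuS_of_le (hc : 0 < c) {x : EuclideanSpace ℝ (Fin p)} (hx : c ≤ ‖x‖) :
    ‖nuS c x‖ = 1 := by
  rw [norm_nuS hc.le, sc_eq_self_of_le hc.le hx, div_self (hc.trans_le hx).ne']

lemma norm_nuS_le (hc : 0 < c) (x : EuclideanSpace ℝ (Fin p)) :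
    ‖nuS c x‖ ≤ (‖x‖ / c) ^ ((2:ℝ)/3) := by
  rcases eq_or_ne x 0 with rfl | hx
  · rw [nuS_zero, norm_zero]; positivity
  have hr : 0 < ‖x‖ := norm_pos_iff.2 hx
  calc ‖nuS c x‖ = ‖x‖ / sc c ‖x‖ := norm_nuS hc.le x
    _ ≤ ‖x‖ / (c ^ ((2:ℝ)/3) * ‖x‖ ^ ((1:ℝ)/3)) :=
        div_le_div_of_nonneg_left hr.le (by positivity) (le_sc hc.le hr.le)
    _ = (‖x‖ / c) ^ ((2:ℝ)/3) := by
        rw [Real.div_rpow hr.le hc.le]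
        nth_rw 1 [← rpow_two_thirds_mul_rpow_one_third hr.le]
        exact mul_div_mul_right _ _ (by positivity)

lemma continuousAt_nuS_zero (hc : 0 < c) :
    ContinuousAt (fun x : EuclideanSpace ℝ (Fin p) ↦ nuS c x) 0 := by
  rw [ContinuousAt, nuS_zero, tendsto_zero_iff_norm_tendsto_zero]
  refine squeeze_zero (fun _ ↦ norm_nonneg _) (norm_nuS_le hc) ?_
  have hbound : Continuous fun x : EuclideanSpace ℝ (Fin p) ↦ (‖x‖ / c) ^ ((2:ℝ)/3) := by
    fun_prop (disch := norm_num)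
  simpa using hbound.tendsto 0

lemma locallyLipschitzOn_nuS (hc : 0 < c) :
    LocallyLipschitzOn {0}ᶜ (fun x : EuclideanSpace ℝ (Fin p) ↦ nuS c x) := by
  have hinv : LocallyLipschitzOn {0}ᶜ fun x : EuclideanSpace ℝ (Fin p) ↦ ‖x‖⁻¹ :=
    locallyLipschitzOn_of_contDiffAt fun x hx ↦
      (contDiffAt_id.norm ℝ hx).inv (norm_ne_zero_iff.2 hx)
  have hcbrt : LocallyLipschitzOn {0}ᶜ
      fun x : EuclideanSpace ℝ (Fin p) ↦ (c ^ ((2:ℝ)/3) * ‖x‖ ^ ((1:ℝ)/3))⁻¹ :=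
    locallyLipschitzOn_of_contDiffAt fun x hx ↦
      have hr : 0 < ‖x‖ := norm_pos_iff.2 hx
      (contDiffAt_const.mul ((contDiffAt_id.norm ℝ hx).rpow_const_of_ne hr.ne')).inv
        (by positivity)
  have hneg : LocallyLipschitzOn {0}ᶜ fun x : EuclideanSpace ℝ (Fin p) ↦ -x :=
    (contDiff_neg (𝕜 := ℝ)).locallyLipschitz.locallyLipschitzOn
  refine ((hinv.min hcbrt).smul hneg).congr ?_
  intro x (hx : x ≠ 0)
  dsimp only
  rw [nuS, if_neg hx, inv_sc_eq_min hc (norm_pos_iff.2 hx), neg_smul, smul_neg]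

end nuS

theorem stmt0_general (p : ℕ) (c : ℝ) (hc : 0 < c) :
    Continuous (fun ξ : EuclideanSpace ℝ (Fin p) => nuS c ξ) ∧
    (∀ ξ : EuclideanSpace ℝ (Fin p), ξ ≠ 0 →
      ∃ K : NNReal, ∃ t ∈ nhds ξ, LipschitzOnWith K (fun ξ' => nuS c ξ') t) ∧
    (∀ ξ : EuclideanSpace ℝ (Fin p), c ≤ ‖ξ‖ → ‖nuS c ξ‖ = 1) := by
  have hlip := locallyLipschitzOn_nuS (p := p) hc
  refine ⟨continuous_iff_continuousAt.2 fun ξ ↦ ?_,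
    fun ξ hξ ↦ hlip.exists_lipschitzOnWith_nhds isOpen_compl_singleton hξ,
    fun ξ hξ ↦ norm_nuS_of_le hc hξ⟩
  rcases eq_or_ne ξ 0 with rfl | hξ
  · exact continuousAt_nuS_zero hc
  · exact hlip.continuousOn.continuousAt (isOpen_compl_singleton.mem_nhds hξ)

theorem stmt0 (p : ℕ) (hp : 1 ≤ p) (c : ℝ) (hc : 0 < c) :
    Continuous (fun ξ : EuclideanSpace ℝ (Fin p) => nuS c ξ) ∧
    (∀ ξ : EuclideanSpace ℝ (Fin p), ξ ≠ 0 →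
      ∃ K : NNReal, ∃ t ∈ nhds ξ, LipschitzOnWith K (fun ξ' => nuS c ξ') t) ∧
    (∀ ξ : EuclideanSpace ℝ (Fin p), c ≤ ‖ξ‖ → ‖nuS c ξ‖ = 1) :=
  stmt0_general p c hc
end

section
/- (Only the nearest avoidance term is active on a safety sphere.) Assume each activation radius satisfies Δ_i < λ_i < min_{j ≠ i}(‖q_i − q_j‖ − Δ_j). If ξ ∈ ℝ^p satisfies ‖ξ − q_j‖ = Δ_j for some j ∈ {1,…,N}, then ‖ξ − q_i‖ > λ_i for every i ≠ j, and consequently α_s^i(ξ) = 1 and α_a^i(ξ) = 0 for every i ≠ j. -/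
open scoped RealInnerProductSpace
open Classical

theorem stmt13 (p N : ℕ) (hp : 1 ≤ p)
    (q : Fin N → EuclideanSpace ℝ (Fin p)) (Δ lam : Fin N → ℝ)
    (hΔ : ∀ i, 0 < Δ i)
    (hlam₁ : ∀ i, Δ i < lam i)
    (hlam₂ : ∀ i j, j ≠ i → lam i < ‖q i - q j‖ - Δ j)
    (ξ : EuclideanSpace ℝ (Fin p)) (j : Fin N) (hξ : ‖ξ - q j‖ = Δ j) :
    ∀ i, i ≠ j → lam i < ‖ξ - q i‖ ∧ alphaS (q i) (Δ i) (lam i) ξ = 1 ∧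
      alphaA (q i) (Δ i) (lam i) ξ = 0 := by
  intro i hij
  have hdist : lam i < ‖ξ - q i‖ := by
    have h1 : lam i < ‖q i - q j‖ - Δ j := hlam₂ i j (Ne.symm hij)
    have h2 : ‖q i - q j‖ ≤ ‖ξ - q i‖ + ‖ξ - q j‖ := by
      calc ‖q i - q j‖ = ‖(ξ - q j) - (ξ - q i)‖ := by abel_nf
        _ ≤ ‖ξ - q j‖ + ‖ξ - q i‖ := norm_sub_le _ _
        _ = ‖ξ - q i‖ + ‖ξ - q j‖ := by ring
    rw [hξ] at h2
    linarith
  have hσ : sigmaQ (q i) ξ ≤ 1 := by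
    unfold sigmaQ; exact max_le (by norm_num) (min_le_right _ _)
  have hσ0 : 0 ≤ sigmaQ (q i) ξ := le_max_left _ _
  have hden : (0:ℝ) < lam i - Δ i := by linarith [hlam₁ i]
  have hnum : lam i - Δ i ≤ ‖ξ - q i‖ - Δ i * sigmaQ (q i) ξ := by
    nlinarith [hΔ i]
  have hαS : alphaS (q i) (Δ i) (lam i) ξ = 1 := by
    unfold alphaS
    have : (1:ℝ) ≤ (‖ξ - q i‖ - Δ i * sigmaQ (q i) ξ) / (lam i - Δ i) :=
      (one_le_div hden).2 hnum
    rw [min_eq_right this, max_eq_right (by norm_num)]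
  refine ⟨hdist, hαS, ?_⟩
  unfold alphaA
  rw [hαS]; ring
end

section
/- (Pointwise monotonicity of the multi-obstacle feedback.) For every ξ ∈ ℝ^p with ξ ∉ {q_1,…,q_N}, one has ⟨ξ, μ(ξ)⟩ ≤ 0. -/
open scoped RealInnerProductSpace
open Classical

noncomputable def muMulti (c : ℝ) {p N : ℕ} (q : Fin N → EuclideanSpace ℝ (Fin p))
    (Δ lam : Fin N → ℝ) (ξ : EuclideanSpace ℝ (Fin p)) : EuclideanSpace ℝ (Fin p) :=
  (∏ i, alphaS (q i) (Δ i) (lam i) ξ) • nuS c ξ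
    + ∑ i, alphaA (q i) (Δ i) (lam i) ξ • nuA c (q i) ξ

theorem stmt14 (p N : ℕ) (hp : 1 ≤ p) (c : ℝ) (hc : 0 < c)
    (q : Fin N → EuclideanSpace ℝ (Fin p)) (Δ lam : Fin N → ℝ)
    (hΔ : ∀ i, 0 < Δ i) (hlam : ∀ i, Δ i < lam i) :
    ∀ ξ : EuclideanSpace ℝ (Fin p), (∀ i, ξ ≠ q i) →
      ⟪ξ, muMulti c q Δ lam ξ⟫ ≤ 0 := by
  intro ξ hξ
  by_cases h0 : ξ = 0
  · subst h0
    simp [muMulti, nuS, nuA, proj, inner_add_right, inner_smul_right]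
  have hn : 0 < ‖ξ‖ := norm_pos_iff.mpr h0
  have hs : 0 < sc c ‖ξ‖ := by
    unfold sc
    split_ifs
    · positivity
    · exact hn
  have hsinv : 0 ≤ (sc c ‖ξ‖)⁻¹ := le_of_lt (inv_pos.mpr hs)
  have hnuS : ⟪ξ, nuS c ξ⟫ = -((sc c ‖ξ‖)⁻¹ * ‖ξ‖ ^ 2) := by
    simp only [nuS, if_neg h0, real_inner_smul_right, real_inner_self_eq_norm_sq]
    ring
  have hnuSle : ⟪ξ, nuS c ξ⟫ ≤ 0 := by
    rw [hnuS]
    have : 0 ≤ (sc c ‖ξ‖)⁻¹ * ‖ξ‖ ^ 2 := by positivity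
    linarith
  have hnuA : ∀ i, ⟪ξ, nuA c (q i) ξ⟫ ≤ 0 := by
    intro i
    have hz : ξ - q i ≠ 0 := sub_ne_zero.mpr (hξ i)
    have hzn : 0 < ‖ξ - q i‖ := norm_pos_iff.mpr hz
    have hcs : ⟪ξ - q i, ξ⟫ * ⟪ξ - q i, ξ⟫ ≤ ‖ξ - q i‖ ^ 2 * ‖ξ‖ ^ 2 := by
      have h := real_inner_mul_inner_self_le (ξ - q i) ξ
      rw [real_inner_self_eq_norm_sq, real_inner_self_eq_norm_sq] at h
      nlinarith [h]
    have heq : ⟪ξ, nuA c (q i) ξ⟫ =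
        -((sc c ‖ξ‖)⁻¹ * (‖ξ‖ ^ 2 - ⟪ξ - q i, ξ⟫ * ⟪ξ - q i, ξ⟫ / ‖ξ - q i‖ ^ 2)) := by
      have hz2 : (‖ξ - q i‖ : ℝ) ^ 2 ≠ 0 := pow_ne_zero 2 (norm_ne_zero_iff.mpr hz)
      have hs0 : sc c ‖ξ‖ ≠ 0 := ne_of_gt hs
      simp only [nuA, proj, nuS, if_neg h0, inner_sub_right, inner_sub_left,
        real_inner_smul_right, real_inner_smul_left, real_inner_self_eq_norm_sq,
        real_inner_comm (q i) ξ]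
      generalize ⟪ξ, q i⟫ = B
      field_simp
      ring
    rw [heq]
    have h1 : ⟪ξ - q i, ξ⟫ * ⟪ξ - q i, ξ⟫ / ‖ξ - q i‖ ^ 2 ≤ ‖ξ‖ ^ 2 := by
      rw [div_le_iff₀ (by positivity)]
      nlinarith [hcs]
    have h2 : 0 ≤ (sc c ‖ξ‖)⁻¹ * (‖ξ‖ ^ 2 - ⟪ξ - q i, ξ⟫ * ⟪ξ - q i, ξ⟫ / ‖ξ - q i‖ ^ 2) :=
      mul_nonneg hsinv (by linarith)
    linarith
  have halphaS : ∀ i, 0 ≤ alphaS (q i) (Δ i) (lam i) ξ := fun i => le_max_left _ _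
  have halphaA : ∀ i, 0 ≤ alphaA (q i) (Δ i) (lam i) ξ := by
    intro i
    apply mul_nonneg (le_max_left _ _)
    have : alphaS (q i) (Δ i) (lam i) ξ ≤ 1 :=
      max_le zero_le_one (min_le_right _ _)
    linarith
  have hexp : ⟪ξ, muMulti c q Δ lam ξ⟫ =
      (∏ i, alphaS (q i) (Δ i) (lam i) ξ) * ⟪ξ, nuS c ξ⟫
        + ∑ i, alphaA (q i) (Δ i) (lam i) ξ * ⟪ξ, nuA c (q i) ξ⟫ := by
    simp only [muMulti, inner_add_right, inner_sum, real_inner_smul_right]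
  rw [hexp]
  have t1 : (∏ i, alphaS (q i) (Δ i) (lam i) ξ) * ⟪ξ, nuS c ξ⟫ ≤ 0 :=
    mul_nonpos_of_nonneg_of_nonpos (Finset.prod_nonneg fun i _ => halphaS i) hnuSle
  have t2 : ∑ i, alphaA (q i) (Δ i) (lam i) ξ * ⟪ξ, nuA c (q i) ξ⟫ ≤ 0 :=
    Finset.sum_nonpos fun i _ => mul_nonpos_of_nonneg_of_nonpos (halphaA i) (hnuA i)
  linarith
end

section
/- (Proposition 1, attractivity part.) Let f : ℝ^n × ℝ^m → ℝ^n and u : ℝ^n → ℝ^m be continuous, let V : ℝ^n → [0,∞) be continuously differentiable, and let α₃ : [0,∞) → [0,∞) be continuous, strictly increasing with α₃(0) = 0 and α₃(s) > 0 for s > 0, such that ⟨∇V(x), f(x, u(x))⟩ ≤ −α₃(V(x)) for all x ∈ ℝ^n. Let x : [0,∞) → ℝ^n be continuously differentiable with x'(t) = f(x(t), u(x(t))) for all t ≥ 0. Then V(x(t)) → 0 as t → ∞. -/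
open scoped RealInnerProductSpace
open Set Filter Topology

/-!
Along the trajectory, `g t = V (x t)` satisfies `g' ≤ -α₃ (g) ≤ 0`, so `g` is nonincreasing and
bounded below by `0`. If `g` stayed above some `ε > 0`, monotonicity of `α₃` would give
`g' ≤ -α₃ ε < 0` for all times, so `g` would eventually become negative. Hence `g` drops below
every `ε > 0`, and being nonincreasing it stays there.
-/

theorem DifferentiableAt.hasDerivAt_comp_inner_gradient {F : Type*} [NormedAddCommGroup F]
    [InnerProductSpace ℝ F] [CompleteSpace F] {V : F → ℝ} {x : ℝ → F} {x' : F} {t : ℝ}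
    (hV : DifferentiableAt ℝ V (x t)) (hx : HasDerivAt x x' t) :
    HasDerivAt (fun s => V (x s)) ⟪gradient V (x t), x'⟫ t := by
  rw [inner_gradient_left]
  exact hV.hasFDerivAt.comp_hasDerivAt t hx

section ScalarLyapunov

variable {g g' : ℝ → ℝ} {a : ℝ}

theorem antitoneOn_Ici_of_hasDerivAt_nonpos (hg : ∀ t ∈ Ici a, HasDerivAt g (g' t) t)
    (hg' : ∀ t ∈ Ioi a, g' t ≤ 0) : AntitoneOn g (Ici a) := by
  refine antitoneOn_of_hasDerivWithinAt_nonpos (f' := g') (convex_Ici a)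
    (fun t ht => (hg t ht).continuousAt.continuousWithinAt) (fun t ht => ?_) (fun t ht => ?_)
  · rw [interior_Ici] at ht ⊢
    exact (hg t (mem_Ici_of_Ioi ht)).hasDerivWithinAt
  · rw [interior_Ici] at ht
    exact hg' t ht

theorem le_sub_mul_of_hasDerivAt_le {c : ℝ} (hg : ∀ t ∈ Ici a, HasDerivAt g (g' t) t)
    (hg' : ∀ t ∈ Ioi a, g' t ≤ -c) {t : ℝ} (ht : a ≤ t) : g t ≤ g a - c * (t - a) := by
  have hanti : AntitoneOn (fun s => g s + c * s) (Ici a) :=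
    antitoneOn_Ici_of_hasDerivAt_nonpos (g' := fun s => g' s + c)
      (fun s hs => (hg s hs).add ((hasDerivAt_id s).const_mul c) |>.congr_deriv (by simp))
      (fun s hs => by linarith [hg' s hs])
  have hat : g t + c * t ≤ g a + c * a := hanti self_mem_Ici ht ht
  linarith

variable {α : ℝ → ℝ}

theorem exists_lt_of_hasDerivAt_le_neg (hg0 : ∀ t ∈ Ici a, 0 ≤ g t)
    (hg : ∀ t ∈ Ici a, HasDerivAt g (g' t) t) (hg' : ∀ t ∈ Ici a, g' t ≤ -α (g t))
    (hα : MonotoneOn α (Ici 0)) {ε : ℝ} (hε : 0 ≤ ε) (hαε : 0 < α ε) :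
    ∃ t ∈ Ici a, g t < ε := by
  by_contra! hge
  have hslope : ∀ t ∈ Ioi a, g' t ≤ -α ε := fun t ht =>
    (hg' t (mem_Ici_of_Ioi ht)).trans <| neg_le_neg <|
      hα hε (hε.trans (hge t (mem_Ici_of_Ioi ht))) (hge t (mem_Ici_of_Ioi ht))
  set T := a + g a / α ε + 1
  have hT : a ≤ T := by have := div_nonneg (hg0 a self_mem_Ici) hαε.le; linarith
  have hgT := le_sub_mul_of_hasDerivAt_le hg hslope hT
  have hcT : α ε * (T - a) = g a + α ε := by simp only [T]; field_simp; ring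
  linarith [hg0 T hT]

theorem tendsto_zero_of_hasDerivAt_le_neg (hg0 : ∀ t ∈ Ici a, 0 ≤ g t)
    (hg : ∀ t ∈ Ici a, HasDerivAt g (g' t) t) (hg' : ∀ t ∈ Ici a, g' t ≤ -α (g t))
    (hα : MonotoneOn α (Ici 0)) (hα0 : α 0 = 0) (hαpos : ∀ s, 0 < s → 0 < α s) :
    Tendsto g atTop (𝓝 0) := by
  have hanti : AntitoneOn g (Ici a) :=
    antitoneOn_Ici_of_hasDerivAt_nonpos hg fun t ht =>
      have hgt := hg0 t (mem_Ici_of_Ioi ht)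
      (hg' t (mem_Ici_of_Ioi ht)).trans <| neg_nonpos.mpr <| hα0 ▸ hα self_mem_Ici hgt hgt
  refine tendsto_order.2 ⟨fun b hb => ?_, fun b hb => ?_⟩
  · filter_upwards [eventually_ge_atTop a] with t ht using hb.trans_le (hg0 t ht)
  · obtain ⟨t₀, ht₀, hlt⟩ := exists_lt_of_hasDerivAt_le_neg hg0 hg hg' hα hb.le (hαpos b hb)
    filter_upwards [eventually_ge_atTop t₀] with t ht
    exact (hanti ht₀ (mem_Ici.2 (le_trans ht₀ ht)) ht).trans_lt hlt

end ScalarLyapunov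

theorem stmt18_general (n m : ℕ)
    (f : EuclideanSpace ℝ (Fin n) → EuclideanSpace ℝ (Fin m) → EuclideanSpace ℝ (Fin n))
    (u : EuclideanSpace ℝ (Fin n) → EuclideanSpace ℝ (Fin m))
    (V : EuclideanSpace ℝ (Fin n) → ℝ) (hVnonneg : ∀ x, 0 ≤ V x)
    (hV : ContDiff ℝ 1 V)
    (α₃ : ℝ → ℝ)
    (hα₃mono : StrictMonoOn α₃ (Set.Ici (0:ℝ)))
    (hα₃zero : α₃ 0 = 0) (hα₃pos : ∀ s, 0 < s → 0 < α₃ s)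
    (hdecr : ∀ x, ⟪gradient V x, f x (u x)⟫ ≤ -α₃ (V x))
    (x : ℝ → EuclideanSpace ℝ (Fin n))
    (hode : ∀ t ∈ Set.Ici (0:ℝ), HasDerivAt x (f (x t) (u (x t))) t) :
    Filter.Tendsto (fun t => V (x t)) Filter.atTop (nhds 0) :=
  tendsto_zero_of_hasDerivAt_le_neg (a := 0) (fun t _ => hVnonneg (x t))
    (fun t ht => (hV.differentiable one_ne_zero (x t)).hasDerivAt_comp_inner_gradient (hode t ht))
    (fun t _ => hdecr (x t)) hα₃mono.monotoneOn hα₃zero hα₃pos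

theorem stmt18 (n m : ℕ) (hn : 1 ≤ n) (hm : 1 ≤ m)
    (f : EuclideanSpace ℝ (Fin n) → EuclideanSpace ℝ (Fin m) → EuclideanSpace ℝ (Fin n))
    (u : EuclideanSpace ℝ (Fin n) → EuclideanSpace ℝ (Fin m))
    (hf : Continuous (fun pr : EuclideanSpace ℝ (Fin n) × EuclideanSpace ℝ (Fin m) => f pr.1 pr.2))
    (hu : Continuous u)
    (V : EuclideanSpace ℝ (Fin n) → ℝ) (hVnonneg : ∀ x, 0 ≤ V x)
    (hV : ContDiff ℝ 1 V)
    (α₃ : ℝ → ℝ) (hα₃cont : ContinuousOn α₃ (Set.Ici (0:ℝ)))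
    (hα₃mono : StrictMonoOn α₃ (Set.Ici (0:ℝ)))
    (hα₃zero : α₃ 0 = 0) (hα₃pos : ∀ s, 0 < s → 0 < α₃ s)
    (hdecr : ∀ x, ⟪gradient V x, f x (u x)⟫ ≤ -α₃ (V x))
    (x : ℝ → EuclideanSpace ℝ (Fin n))
    (hode : ∀ t ∈ Set.Ici (0:ℝ), HasDerivAt x (f (x t) (u (x t))) t) :
    Filter.Tendsto (fun t => V (x t)) Filter.atTop (nhds 0) :=
  stmt18_general n m f u V hVnonneg hV α₃ hα₃mono hα₃zero hα₃pos hdecr x hode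
end

section
/- (Theorem 5(ii) along flows: forward invariance of the safe sublevel-set condition.) Let f : ℝ^n × ℝ^m → ℝ^n, u : ℝ^n × ℝ^p → ℝ^m and g : ℝ^p → ℝ^p be continuous, let V : ℝ^n × ℝ^p → [0,∞), (x,ζ) ↦ V_ζ(x), be continuous, locally Lipschitz in (x,ζ) and continuously differentiable with respect to x, let d : ℝ^p → ℝ be continuous with d(ζ) > 0 for all ζ ∈ ℝ^p, let ℓ > 0, and let α₃ : [0,∞) → [0,∞) satisfy α₃(s) > 0 for all s > 0 and ⟨∇_x V_ζ(x), f(x, u(x,ζ))⟩ ≤ −α₃(V_ζ(x)) for all (x,ζ) ∈ ℝ^n × ℝ^p. Let (x,ζ) : [0,∞) → ℝ^n × ℝ^p be continuously differentiable with x'(t) = f(x(t), u(x(t),ζ(t))) and ζ'(t) = max{0, ℓ·(d(ζ(t)) − V_{ζ(t)}(x(t)))}·g(ζ(t)) for all t ≥ 0. If d(ζ(0)) − V_{ζ(0)}(x(0)) ≥ 0, then d(ζ(t)) − V_{ζ(t)}(x(t)) ≥ 0 for all t ≥ 0. -/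
/-!
Suppose the safety margin `d (ζ t) - V (x t) (ζ t)` were negative at some `t₁`, and let `c` be
its last zero before `t₁`. On `[c, t₁)` the margin is nonpositive, so the adaptation law
`ζ' = max 0 (ℓ · margin) • g ζ` vanishes and `ζ` is frozen at `ζ c`. With `ζ` frozen,
`t ↦ V (x t) (ζ c)` is nonincreasing by the decrease condition, while `d (ζ c)` stays fixed; hence
the margin at `t₁` is at least the margin at `c`, which is `0`.
-/

open scoped RealInnerProductSpace
open Set

theorem exists_last_zero_of_continuousOn {h : ℝ → ℝ} {a b : ℝ} (hab : a ≤ b)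
    (hh : ContinuousOn h (Icc a b)) (ha : 0 ≤ h a) (hb : h b < 0) :
    ∃ c ∈ Ico a b, h c = 0 ∧ ∀ t ∈ Ioc c b, h t < 0 := by
  set S := Icc a b ∩ h ⁻¹' Ici 0
  have hSbdd : BddAbove S := ⟨b, fun t ht => ht.1.2⟩
  have hcS : sSup S ∈ S :=
    (hh.preimage_isClosed_of_isClosed isClosed_Icc isClosed_Ici).csSup_mem
      ⟨a, ⟨left_mem_Icc.2 hab, ha⟩⟩ hSbdd
  set c := sSup S
  have hcb : c < b := hcS.1.2.lt_of_ne fun hcb => (hb.trans_le (hcb ▸ hcS.2)).false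
  have hneg : ∀ t ∈ Ioc c b, h t < 0 := fun t ht => not_le.1 fun h0 =>
    ht.1.not_ge (le_csSup hSbdd ⟨⟨hcS.1.1.trans ht.1.le, ht.2⟩, h0⟩)
  -- a zero of `h` on `[c, b]`, provided by the intermediate value theorem, can only be `c`
  obtain ⟨z, hz, hz0⟩ := intermediate_value_Icc' hcb.le (hh.mono (Icc_subset_Icc_left hcS.1.1))
    ⟨hb.le, hcS.2⟩
  have hzc : z = c := le_antisymm (le_csSup hSbdd ⟨⟨hcS.1.1.trans hz.1, hz.2⟩, hz0.ge⟩) hz.1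
  exact ⟨c, ⟨hcS.1.1, hcb⟩, hzc ▸ hz0, hneg⟩

theorem antitoneOn_comp_of_inner_gradient_nonpos {E : Type*} [NormedAddCommGroup E]
    [InnerProductSpace ℝ E] [CompleteSpace E] {W : E → ℝ} (hW : Differentiable ℝ W)
    {x x' : ℝ → E} {s : Set ℝ} (hs : Convex ℝ s) (hx : ∀ t ∈ s, HasDerivAt x (x' t) t)
    (hdecr : ∀ t ∈ interior s, ⟪gradient W (x t), x' t⟫ ≤ 0) : AntitoneOn (W ∘ x) s := by
  have hderiv : ∀ t ∈ s, HasDerivAt (W ∘ x) ⟪gradient W (x t), x' t⟫ t := fun t ht => by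
    simpa using ((hW (x t)).hasGradientAt.hasFDerivAt.comp_hasDerivAt t (hx t ht))
  exact antitoneOn_of_hasDerivWithinAt_nonpos hs
    (fun t ht => (hderiv t ht).continuousAt.continuousWithinAt)
    (fun t ht => (hderiv t (interior_subset ht)).hasDerivWithinAt) hdecr

theorem stmt19_general (n m p : ℕ)
    (f : EuclideanSpace ℝ (Fin n) → EuclideanSpace ℝ (Fin m) → EuclideanSpace ℝ (Fin n))
    (u : EuclideanSpace ℝ (Fin n) → EuclideanSpace ℝ (Fin p) → EuclideanSpace ℝ (Fin m))
    (g : EuclideanSpace ℝ (Fin p) → EuclideanSpace ℝ (Fin p))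
    (V : EuclideanSpace ℝ (Fin n) → EuclideanSpace ℝ (Fin p) → ℝ)
    (hVnonneg : ∀ x ζ, 0 ≤ V x ζ)
    (hVlip : LocallyLipschitz (fun pr : EuclideanSpace ℝ (Fin n) × EuclideanSpace ℝ (Fin p) => V pr.1 pr.2))
    (hVx : ∀ ζ, ContDiff ℝ 1 (fun x => V x ζ))
    (d : EuclideanSpace ℝ (Fin p) → ℝ) (hd : Continuous d)
    (ℓ : ℝ) (hℓ : 0 < ℓ)
    (α₃ : ℝ → ℝ) (hα₃nonneg : ∀ s, 0 ≤ s → 0 ≤ α₃ s)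
    (hdecr : ∀ x ζ, ⟪gradient (fun y => V y ζ) x, f x (u x ζ)⟫ ≤ -α₃ (V x ζ))
    (x : ℝ → EuclideanSpace ℝ (Fin n)) (ζ : ℝ → EuclideanSpace ℝ (Fin p))
    (hodex : ∀ t ∈ Set.Ici (0:ℝ), HasDerivAt x (f (x t) (u (x t) (ζ t))) t)
    (hodeζ : ∀ t ∈ Set.Ici (0:ℝ),
      HasDerivAt ζ ((max 0 (ℓ * (d (ζ t) - V (x t) (ζ t)))) • g (ζ t)) t)
    (h0 : 0 ≤ d (ζ 0) - V (x 0) (ζ 0)) :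
    ∀ t ∈ Set.Ici (0:ℝ), 0 ≤ d (ζ t) - V (x t) (ζ t) := by
  intro t₁ ht₁
  by_contra! hneg
  have hmargin : ContinuousOn (fun t => d (ζ t) - V (x t) (ζ t)) (Icc 0 t₁) := fun t ht =>
    have hxt := (hodex t ht.1).continuousAt
    have hζt := (hodeζ t ht.1).continuousAt
    ((hd.continuousAt.comp hζt).sub (hVlip.continuous.continuousAt.comp
      (f := fun t => (x t, ζ t)) (hxt.prodMk hζt))).continuousWithinAt
  obtain ⟨c, hc, hzero, hnegAfter⟩ := exists_last_zero_of_continuousOn ht₁ hmargin h0 hneg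
  have hsub : Icc c t₁ ⊆ Ici 0 := fun t ht => hc.1.trans ht.1
  have hfrozen : ∀ t ∈ Icc c t₁, ζ t = ζ c :=
    constant_of_has_deriv_right_zero
      (fun t ht => (hodeζ t (hsub ht)).continuousAt.continuousWithinAt) fun t ht => by
        have hle : d (ζ t) - V (x t) (ζ t) ≤ 0 := ht.1.eq_or_lt.elim (fun h => h ▸ hzero.le)
          fun h => (hnegAfter t ⟨h, ht.2.le⟩).le
        simpa [max_eq_left (mul_nonpos_of_nonneg_of_nonpos hℓ.le hle)] using
          (hodeζ t (hsub (Ico_subset_Icc_self ht))).hasDerivWithinAt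
  have hanti : AntitoneOn (fun t => V (x t) (ζ c)) (Icc c t₁) :=
    antitoneOn_comp_of_inner_gradient_nonpos ((hVx (ζ c)).differentiable one_ne_zero)
      (convex_Icc c t₁) (fun t ht => hodex t (hsub ht)) fun t ht => by
        rw [hfrozen t (interior_subset ht)]
        linarith [hdecr (x t) (ζ c), hα₃nonneg _ (hVnonneg (x t) (ζ c))]
  have hdecay := hanti (left_mem_Icc.2 hc.2.le) (right_mem_Icc.2 hc.2.le) hc.2.le
  rw [hfrozen t₁ (right_mem_Icc.2 hc.2.le)] at hneg
  linarith

theorem stmt19 (n m p : ℕ) (hn : 1 ≤ n) (hm : 1 ≤ m) (hp : 1 ≤ p)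
    (f : EuclideanSpace ℝ (Fin n) → EuclideanSpace ℝ (Fin m) → EuclideanSpace ℝ (Fin n))
    (u : EuclideanSpace ℝ (Fin n) → EuclideanSpace ℝ (Fin p) → EuclideanSpace ℝ (Fin m))
    (g : EuclideanSpace ℝ (Fin p) → EuclideanSpace ℝ (Fin p))
    (hf : Continuous (fun pr : EuclideanSpace ℝ (Fin n) × EuclideanSpace ℝ (Fin m) => f pr.1 pr.2))
    (hu : Continuous (fun pr : EuclideanSpace ℝ (Fin n) × EuclideanSpace ℝ (Fin p) => u pr.1 pr.2))
    (hg : Continuous g)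
    (V : EuclideanSpace ℝ (Fin n) → EuclideanSpace ℝ (Fin p) → ℝ)
    (hVnonneg : ∀ x ζ, 0 ≤ V x ζ)
    (hVlip : LocallyLipschitz (fun pr : EuclideanSpace ℝ (Fin n) × EuclideanSpace ℝ (Fin p) => V pr.1 pr.2))
    (hVx : ∀ ζ, ContDiff ℝ 1 (fun x => V x ζ))
    (d : EuclideanSpace ℝ (Fin p) → ℝ) (hd : Continuous d) (hdpos : ∀ ζ, 0 < d ζ)
    (ℓ : ℝ) (hℓ : 0 < ℓ)
    (α₃ : ℝ → ℝ) (hα₃nonneg : ∀ s, 0 ≤ s → 0 ≤ α₃ s) (hα₃pos : ∀ s, 0 < s → 0 < α₃ s)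
    (hdecr : ∀ x ζ, ⟪gradient (fun y => V y ζ) x, f x (u x ζ)⟫ ≤ -α₃ (V x ζ))
    (x : ℝ → EuclideanSpace ℝ (Fin n)) (ζ : ℝ → EuclideanSpace ℝ (Fin p))
    (hodex : ∀ t ∈ Set.Ici (0:ℝ), HasDerivAt x (f (x t) (u (x t) (ζ t))) t)
    (hodeζ : ∀ t ∈ Set.Ici (0:ℝ),
      HasDerivAt ζ ((max 0 (ℓ * (d (ζ t) - V (x t) (ζ t)))) • g (ζ t)) t)
    (h0 : 0 ≤ d (ζ 0) - V (x 0) (ζ 0)) :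
    ∀ t ∈ Set.Ici (0:ℝ), 0 ≤ d (ζ t) - V (x t) (ζ t) :=
  stmt19_general n m p f u g V hVnonneg hVlip hVx d hd ℓ hℓ α₃ hα₃nonneg hdecr x ζ hodex hodeζ h0
end
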